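/- Let $\partial$ be the degree-$(1,0)$ derivation on the exterior algebra generated by $\varphi^1,\varphi^2,\varphi^3,\varphi^4$ with $\partial\varphi^1 = 0$, $\partial\varphi^4 = -\tfrac{a}{2}\varphi^1\wedge\varphi^4$, $\partial\varphi^2 = \tfrac{-a_{11}-ia_{21}}{2}\varphi^{12} + \tfrac{-a_{13}-ia_{23}}{2}\varphi^{13} + \tfrac{v_5+iv_4}{2}\varphi^{14}$, $\partial\varphi^3 = \tfrac{a_{13}-ia_{23}}{2}\varphi^{12} + \tfrac{-a_{11}+ia_{21}}{2}\varphi^{13} + \tfrac{-v_3-iv_2}{2}\varphi^{14}$. Then $\Omega = \varphi^1\wedge\varphi^4 + \varphi^2\wedge\varphi^3$ satisfies $\partial\Omega = 0$ if and only if $a_{11} = v_2 = v_3 = v_4 = v_5 = 0$. -/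

import Mathlib

/-!
By the Leibniz rule, `∂Ω = -a₁₁ φ¹²³ + ½(-v₃ - i v₂) φ¹²⁴ + ½(-v₅ - i v₄) φ¹³⁴`: the terms
containing `φ¹ ∧ φ¹` drop out and the `a₂₁`-terms cancel. The triple products
`φ¹²³, φ¹²⁴, φ¹³⁴` of the independent `φⁱ` are linearly independent in the exterior algebra
(they are part of the standard basis of `⋀³`), so `∂Ω = 0` exactly when the three complex
coefficients vanish.
-/

open Function

namespace ExteriorAlgebra

section Ring

variable {R M : Type*} [CommRing R] [AddCommGroup M] [Module R M]

theorem ι_mul_ι_comm (a b : M) : ι R a * ι R b = -(ι R b * ι R a) :=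
  eq_neg_of_add_eq_zero_left (ι_add_mul_swap a b)

theorem ι_mul_ι_mul_comm (a b : M) (x : ExteriorAlgebra R M) :
    ι R a * (ι R b * x) = -(ι R b * (ι R a * x)) := by
  rw [← mul_assoc, ι_mul_ι_comm a b, neg_mul, mul_assoc]

theorem ι_mul_ι_mul_eq_zero (a : M) (x : ExteriorAlgebra R M) : ι R a * (ι R a * x) = 0 := by
  rw [← mul_assoc, ι_sq_zero, zero_mul]

theorem apply_ι_mul_ι_add_ι_mul_ι {D : ExteriorAlgebra R M →ₗ[R] ExteriorAlgebra R M}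
    (hD : ∀ x y : M, D (ι R x * ι R y) = D (ι R x) * ι R y - ι R x * D (ι R y))
    {x₁ x₂ x₃ x₄ : M} {α β₂ β₃ β₄ γ₂ γ₃ γ₄ : R}
    (h₁ : D (ι R x₁) = 0) (h₄ : D (ι R x₄) = α • (ι R x₁ * ι R x₄))
    (h₂ : D (ι R x₂) = β₂ • (ι R x₁ * ι R x₂) + β₃ • (ι R x₁ * ι R x₃) + β₄ • (ι R x₁ * ι R x₄))
    (h₃ : D (ι R x₃) = γ₂ • (ι R x₁ * ι R x₂) + γ₃ • (ι R x₁ * ι R x₃) + γ₄ • (ι R x₁ * ι R x₄)) :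
    D (ι R x₁ * ι R x₄ + ι R x₂ * ι R x₃) =
      (β₂ + γ₃) • (ι R x₁ * (ι R x₂ * ι R x₃)) + γ₄ • (ι R x₁ * (ι R x₂ * ι R x₄))
        + (-β₄) • (ι R x₁ * (ι R x₃ * ι R x₄)) := by
  rw [map_add, hD, hD, h₁, h₂, h₃, h₄]
  simp only [add_mul, mul_add, smul_mul_assoc, mul_smul_comm, mul_assoc, ι_sq_zero,
    ι_mul_ι_mul_eq_zero, ι_mul_ι_mul_comm x₂ x₁, ι_mul_ι_comm x₄ x₃, mul_neg, mul_zero, zero_mul]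
  module

end Ring

section Field

variable {K E : Type*} [Field K] [AddCommGroup E] [Module K E]

theorem linearIndependent_ιMulti_comp_orderEmbedding {I ι : Type*} [LinearOrder I] {n : ℕ}
    {v : I → E} (hv : LinearIndependent K v) {f : ι → (Fin n ↪o I)} (hf : Injective f) :
    LinearIndependent K fun j => ιMulti K n (v ∘ f j) := by
  have := ((exteriorPower.ιMulti_family_linearIndependent_field (n := n) hv).map'
    (⋀[K]^n E).subtype (Submodule.ker_subtype _)).comp _
    (Set.powersetCard.ofFinEmbEquiv.injective.comp hf)
  simpa [comp_def, exteriorPower.ιMulti_family] using this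

theorem linearIndependent_ι_mul_ι_mul_ι {x₁ x₂ x₃ x₄ : E}
    (hx : LinearIndependent K ![x₁, x₂, x₃, x₄]) :
    LinearIndependent K ![ι K x₁ * (ι K x₂ * ι K x₃), ι K x₁ * (ι K x₂ * ι K x₄),
      ι K x₁ * (ι K x₃ * ι K x₄)] := by
  let f : Fin 3 → (Fin 3 ↪o Fin 4) := ![
    OrderEmbedding.ofStrictMono ![0, 1, 2] (by decide),
    OrderEmbedding.ofStrictMono ![0, 1, 3] (by decide),
    OrderEmbedding.ofStrictMono ![0, 2, 3] (by decide)]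
  have hf : Injective f := Injective.of_comp (f := fun e => (e 1, e 2)) (by decide)
  convert linearIndependent_ιMulti_comp_orderEmbedding hx hf using 1
  ext j
  fin_cases j <;> simp [f, ιMulti_apply, Matrix.vecTail]

end Field

end ExteriorAlgebra

theorem LinearIndependent.smul_add_smul_add_smul_eq_zero_iff {R M : Type*} [Ring R]
    [AddCommGroup M] [Module R M] {u v w : M} (h : LinearIndependent R ![u, v, w]) {a b c : R} :
    a • u + b • v + c • w = 0 ↔ a = 0 ∧ b = 0 ∧ c = 0 := by
  refine ⟨fun hs => ?_, by rintro ⟨rfl, rfl, rfl⟩; simp⟩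
  have := Fintype.linearIndependent_iff.mp h ![a, b, c] (by simpa [Fin.sum_univ_three] using hs)
  exact ⟨this 0, this 1, this 2⟩

open ExteriorAlgebra in
/-- On the 8-dimensional almost abelian hypercomplex Lie algebra with the given
structure equations, `Ω = φ¹∧φ⁴ + φ²∧φ³` is `∂`-closed iff
`a₁₁ = v₂ = v₃ = v₄ = v₅ = 0`. -/
theorem stmt_16 {V : Type*} [AddCommGroup V] [Module ℂ V]
    (φ1 φ2 φ3 φ4 : V) (a a11 a21 a13 a23 v2 v3 v4 v5 : ℝ)
    (hli : LinearIndependent ℂ ![φ1, φ2, φ3, φ4])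
    (D : ExteriorAlgebra ℂ V →ₗ[ℂ] ExteriorAlgebra ℂ V)
    (hLeib : ∀ x y : V, D (ι ℂ x * ι ℂ y) = D (ι ℂ x) * ι ℂ y - ι ℂ x * D (ι ℂ y))
    (h1 : D (ι ℂ φ1) = 0)
    (h4 : D (ι ℂ φ4) = (-(a : ℂ) / 2) • (ι ℂ φ1 * ι ℂ φ4))
    (h2 : D (ι ℂ φ2) =
        ((-(a11 : ℂ) - (a21 : ℂ) * Complex.I) / 2) • (ι ℂ φ1 * ι ℂ φ2)
      + ((-(a13 : ℂ) - (a23 : ℂ) * Complex.I) / 2) • (ι ℂ φ1 * ι ℂ φ3)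
      + (((v5 : ℂ) + (v4 : ℂ) * Complex.I) / 2) • (ι ℂ φ1 * ι ℂ φ4))
    (h3 : D (ι ℂ φ3) =
        (((a13 : ℂ) - (a23 : ℂ) * Complex.I) / 2) • (ι ℂ φ1 * ι ℂ φ2)
      + ((-(a11 : ℂ) + (a21 : ℂ) * Complex.I) / 2) • (ι ℂ φ1 * ι ℂ φ3)
      + ((-(v3 : ℂ) - (v2 : ℂ) * Complex.I) / 2) • (ι ℂ φ1 * ι ℂ φ4)) :
    D (ι ℂ φ1 * ι ℂ φ4 + ι ℂ φ2 * ι ℂ φ3) = 0 ↔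
      a11 = 0 ∧ v2 = 0 ∧ v3 = 0 ∧ v4 = 0 ∧ v5 = 0 := by
  rw [apply_ι_mul_ι_add_ι_mul_ι hLeib h1 h4 h2 h3,
    (linearIndependent_ι_mul_ι_mul_ι hli).smul_add_smul_add_smul_eq_zero_iff]
  simp [Complex.ext_iff, neg_div]
  tauto
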